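/- The function F_r(d) = 1 - 2Φ(-r/d) - (2/(√(2π)(r/d)))(1 - e^{-(r/d)²/2}) is monotonically decreasing in d for d > 0 (for any fixed r > 0). -/

import Mathlib

noncomputable def stdNormalCDF (t : ℝ) : ℝ :=
  ∫ u in Set.Iic t, Real.exp (-u ^ 2 / 2) / Real.sqrt (2 * Real.pi)

noncomputable def collisionF (r d : ℝ) : ℝ :=
  1 - 2 * stdNormalCDF (-(r / d)) -
    (2 / (Real.sqrt (2 * Real.pi) * (r / d))) * (1 - Real.exp (-(r / d) ^ 2 / 2))

/-!
`collisionF r d` depends on `d` only through `c = r / d`. As a function of `c`, the Gaussian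
density terms cancel in its derivative, which is `2 (1 - exp (-c² / 2)) / (√(2π) c²) > 0`; so it
increases strictly in `c > 0`, while `c = r / d` decreases strictly in `d > 0`.
-/

open Real Set MeasureTheory

theorem hasDerivAt_integral_Iic {E : Type*} [NormedAddCommGroup E] [NormedSpace ℝ E]
    [CompleteSpace E] {f : ℝ → E} (hf : Integrable f) (hf_cont : Continuous f) (x : ℝ) :
    HasDerivAt (fun t => ∫ u in Iic t, f u) (f x) x := by
  have hsplit :
      (fun t => ∫ u in Iic t, f u) = fun t => (∫ u in Iic 0, f u) + ∫ u in 0..t, f u := by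
    funext t
    rw [← intervalIntegral.integral_Iic_sub_Iic hf.integrableOn hf.integrableOn]
    abel
  rw [hsplit]
  exact (intervalIntegral.integral_hasDerivAt_right hf.intervalIntegrable
    (hf_cont.stronglyMeasurableAtFilter _ _) hf_cont.continuousAt).const_add _

theorem integrable_exp_neg_sq_div_two : Integrable fun u : ℝ => exp (-u ^ 2 / 2) := by
  convert integrable_exp_neg_mul_sq (b := 1 / 2) (by norm_num) using 3
  ring

theorem hasDerivAt_stdNormalCDF (x : ℝ) :
    HasDerivAt stdNormalCDF (exp (-x ^ 2 / 2) / √(2 * π)) x :=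
  hasDerivAt_integral_Iic (integrable_exp_neg_sq_div_two.div_const _) (by fun_prop) x

noncomputable def collisionProfile (c : ℝ) : ℝ :=
  1 - 2 * stdNormalCDF (-c) - (2 / (√(2 * π) * c)) * (1 - exp (-c ^ 2 / 2))

theorem collisionF_eq_collisionProfile (r d : ℝ) : collisionF r d = collisionProfile (r / d) :=
  rfl

theorem hasDerivAt_collisionProfile {c : ℝ} (hc : c ≠ 0) :
    HasDerivAt collisionProfile (2 / (√(2 * π) * c ^ 2) * (1 - exp (-c ^ 2 / 2))) c := by
  have hsqrt : √(2 * π) ≠ 0 := by positivity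
  have hcdf : HasDerivAt (fun c => stdNormalCDF (-c)) (exp (-(-c) ^ 2 / 2) / √(2 * π) * -1) c :=
    (hasDerivAt_stdNormalCDF (-c)).comp c (hasDerivAt_neg c)
  have hcoeff : HasDerivAt (fun c => 2 / (√(2 * π) * c))
      ((0 * (√(2 * π) * c) - 2 * (√(2 * π) * 1)) / (√(2 * π) * c) ^ 2) c :=
    (hasDerivAt_const c (2 : ℝ)).div ((hasDerivAt_id c).const_mul √(2 * π)) (mul_ne_zero hsqrt hc)
  have hgauss : HasDerivAt (fun c => exp (-c ^ 2 / 2)) (exp (-c ^ 2 / 2) * (-(2 * c) / 2)) c := by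
    simpa using ((hasDerivAt_pow 2 c).neg.div_const 2).exp
  refine (((hcdf.const_mul 2).const_sub 1).sub
    (hcoeff.mul (hgauss.const_sub 1))).congr_deriv ?_
  field_simp
  ring

theorem collisionProfile_strictMonoOn : StrictMonoOn collisionProfile (Ioi 0) := by
  have hderiv (c : ℝ) (hc : c ∈ Ioi 0) := hasDerivAt_collisionProfile (ne_of_gt hc)
  refine strictMonoOn_of_hasDerivWithinAt_pos (convex_Ioi 0)
    (fun c hc => (hderiv c hc).continuousAt.continuousWithinAt)
    (fun c hc => (hderiv c (interior_subset hc)).hasDerivWithinAt) fun c hc => ?_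
  have hc : 0 < c := interior_subset hc
  have hexp : exp (-c ^ 2 / 2) < 1 := exp_lt_one_iff.2 (by linarith [sq_pos_of_pos hc])
  exact mul_pos (by positivity) (sub_pos.2 hexp)

theorem collisionF_antitone (r : ℝ) (hr : 0 < r) :
    StrictAntiOn (fun d => collisionF r d) (Set.Ioi (0 : ℝ)) := by
  have hratio : StrictAntiOn (fun d => r / d) (Ioi 0) := fun a ha b _ hab =>
    div_lt_div_of_pos_left hr ha hab
  have hmaps : MapsTo (fun d => r / d) (Ioi 0) (Ioi 0) := fun d hd => div_pos hr hd
  simp only [collisionF_eq_collisionProfile]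
  exact collisionProfile_strictMonoOn.comp_strictAntiOn hratio hmaps
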